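/- Combinatorial mutations preserve the Ehrhart series of the dual polytope: if P is a lattice polytope with 0 in its interior and Q := mut_w(P,F) is a combinatorial mutation of P, then for every positive integer k, |kP* ∩ M| = |kQ* ∩ M|. -/

import Mathlib

open Set Pointwise

noncomputable section

def pairing {n : ℕ} (w : Fin n → ℤ) (x : Fin n → ℚ) : ℚ :=
  ∑ i, (w i : ℚ) * x i

def IsLatticePt {n : ℕ} (x : Fin n → ℚ) : Prop := ∀ i, ∃ z : ℤ, x i = (z : ℚ)

def IsLatticePolytope {n : ℕ} (P : Set (Fin n → ℚ)) : Prop :=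
  ∃ S : Finset (Fin n → ℚ), (∀ x ∈ S, IsLatticePt x) ∧ P = convexHull ℚ (S : Set (Fin n → ℚ))

def IsPrimitive {n : ℕ} (w : Fin n → ℤ) : Prop := Finset.univ.gcd w = 1

def wSlice {n : ℕ} (w : Fin n → ℤ) (h : ℤ) (P : Set (Fin n → ℚ)) : Set (Fin n → ℚ) :=
  convexHull ℚ {x | x ∈ P ∧ IsLatticePt x ∧ pairing w x = (h : ℚ)}

def mutation {n : ℕ} (w : Fin n → ℤ) (P F : Set (Fin n → ℚ)) (G : ℤ → Set (Fin n → ℚ)) :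
    Set (Fin n → ℚ) :=
  convexHull ℚ ((⋃ h : ℤ, ⋃ _ : h < 0, G h) ∪
    ⋃ h : ℤ, ⋃ _ : 0 ≤ h, (wSlice w h P + (h : ℚ) • F))

def IsMutData {n : ℕ} (w : Fin n → ℤ) (P F : Set (Fin n → ℚ))
    (G : ℤ → Set (Fin n → ℚ)) : Prop :=
  IsLatticePolytope F ∧ F.Nonempty ∧ (∀ x ∈ F, pairing w x = 0) ∧
  ∀ h : ℤ, h < 0 →
    (G h = ∅ ∨ IsLatticePolytope (G h)) ∧
    {v | v ∈ P.extremePoints ℚ ∧ pairing w v = (h : ℚ)} ⊆ G h + (-(h : ℚ)) • F ∧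
    G h + (-(h : ℚ)) • F ⊆ wSlice w h P

def dpair {n : ℕ} (u v : Fin n → ℚ) : ℚ := ∑ i, u i * v i

def dualP {n : ℕ} (P : Set (Fin n → ℚ)) : Set (Fin n → ℚ) := {u | ∀ v ∈ P, -1 ≤ dpair u v}

/-!
Put `m(u) = min_{f ∈ F} ⟨u, f⟩`. The piecewise linear map `u ↦ u + m(u) w` sends `Q*` into `P*`,
and `u ↦ u - m(u) w` sends `P*` into `Q*`. The first is tested on the vertices of `P`: a vertex `v`
at height `h ≥ 0` gives the point `v + h f` of `Q`, one at height `h < 0` lies in `G h + (-h) F`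
with `G h ⊆ Q`. The second is tested on the generators of `Q`. As `F ⊆ w^⊥` the two maps are
mutually inverse; they commute with positive dilations because `m` is positively homogeneous, and
they preserve `M` because `F` is a lattice polytope. Hence they restrict to a bijection between
the lattice points of `kQ*` and `kP*`.
-/

theorem convexHull_sdiff_singleton_eq {𝕜 V : Type*} [Semiring 𝕜] [PartialOrder 𝕜]
    [AddCommMonoid V] [Module 𝕜 V] {S : Set V} {s : V} (hs : s ∈ convexHull 𝕜 (S \ {s})) :
    convexHull 𝕜 (S \ {s}) = convexHull 𝕜 S := by
  refine (convexHull_mono sdiff_subset).antisymm (convexHull_min (fun t ht => ?_)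
    (convex_convexHull 𝕜 _))
  by_cases hts : t = s
  · exact hts ▸ hs
  · exact subset_convexHull 𝕜 _ ⟨ht, hts⟩

section Minkowski

variable {𝕜 V : Type*} [Field 𝕜] [LinearOrder 𝕜] [IsStrictOrderedRing 𝕜] [AddCommGroup V]
  [Module 𝕜 V]

theorem mem_segment_of_mem_openSegment_of_mem_segment {s x y p q : V}
    (hs : s ∈ openSegment 𝕜 x y) (hx : x ∈ segment 𝕜 s p) (hy : y ∈ segment 𝕜 s q)
    (hxy : ¬(x = s ∧ y = s)) : s ∈ segment 𝕜 p q := by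
  obtain ⟨a, b, ha, hb, hab, hs⟩ := hs
  obtain ⟨a₁, b₁, -, hb₁, hab₁, hx⟩ := hx
  obtain ⟨a₂, b₂, -, hb₂, hab₂, hy⟩ := hy
  obtain rfl : a = 1 - b := eq_sub_of_add_eq hab
  obtain rfl : a₁ = 1 - b₁ := eq_sub_of_add_eq hab₁
  obtain rfl : a₂ = 1 - b₂ := eq_sub_of_add_eq hab₂
  -- Eliminate `x` and `y`; the coefficient of `s` vanishes only if `x = y = s`.
  have hcs : ((1 - b) * b₁ + b * b₂) • s = ((1 - b) * b₁) • p + (b * b₂) • q := by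
    linear_combination (norm := module) -hs - (1 - b) • hx - b • hy
  have hc : 0 < (1 - b) * b₁ + b * b₂ := by
    by_contra! hc
    have hb₁0 : b₁ = 0 := by nlinarith [mul_nonneg ha.le hb₁, mul_nonneg hb.le hb₂]
    have hb₂0 : b₂ = 0 := by nlinarith [mul_nonneg ha.le hb₁, mul_nonneg hb.le hb₂]
    subst hb₁0 hb₂0
    exact hxy ⟨by simpa using hx.symm, by simpa using hy.symm⟩
  refine ⟨_, _, div_nonneg (mul_nonneg ha.le hb₁) hc.le, div_nonneg (mul_nonneg hb.le hb₂) hc.le,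
    by rw [← add_div, div_self hc.ne'], ?_⟩
  conv_rhs => rw [← inv_smul_smul₀ hc.ne' s, hcs]
  simp only [smul_add, smul_smul, div_eq_inv_mul]

theorem mem_convexHull_sdiff_of_notMem_extremePoints {S : Set V} {s : V} (hs : s ∈ S)
    (hext : s ∉ (convexHull 𝕜 S).extremePoints 𝕜) : s ∈ convexHull 𝕜 (S \ {s}) := by
  rcases (S \ {s}).eq_empty_or_nonempty with hempty | hne
  · rw [sdiff_eq_empty, (Set.nonempty_of_mem hs).subset_singleton_iff] at hempty
    subst hempty
    simp [convexHull_singleton, extremePoints_singleton] at hext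
  have hjoin : convexHull 𝕜 S = convexJoin 𝕜 {s} (convexHull 𝕜 (S \ {s})) := by
    rw [← convexHull_insert hne, insert_sdiff_singleton, insert_eq_of_mem hs]
  rw [mem_extremePoints] at hext
  push Not at hext
  obtain ⟨x, hx, y, hy, hsxy, hxy⟩ := hext (subset_convexHull 𝕜 S hs)
  rw [hjoin, mem_convexJoin] at hx hy
  obtain ⟨_, rfl, p, hp, hxp⟩ := hx
  obtain ⟨_, rfl, q, hq, hyq⟩ := hy
  exact (convex_convexHull 𝕜 _).segment_subset hp hq
    (mem_segment_of_mem_openSegment_of_mem_segment hsxy hxp hyq (fun h => hxy h.1 h.2))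

theorem convexHull_extremePoints_convexHull_finset (S : Finset V) :
    convexHull 𝕜 ((convexHull 𝕜 (S : Set V)).extremePoints 𝕜) = convexHull 𝕜 (S : Set V) := by
  classical
  refine (convexHull_min extremePoints_subset (convex_convexHull 𝕜 _)).antisymm ?_
  induction S using Finset.strongInduction with
  | H S ih =>
    by_cases hS : (S : Set V) ⊆ (convexHull 𝕜 (S : Set V)).extremePoints 𝕜
    · exact convexHull_mono hS
    obtain ⟨s, hsS, hs⟩ := not_subset.1 hS
    have herase :=
      convexHull_sdiff_singleton_eq (mem_convexHull_sdiff_of_notMem_extremePoints hsS hs)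
    rw [← Finset.coe_erase] at herase
    rw [← herase]
    exact ih _ (Finset.erase_ssubset hsS)

end Minkowski

namespace IsLatticePolytope

variable {n : ℕ} {P : Set (Fin n → ℚ)}

theorem subset_convexHull_extremePoints (hP : IsLatticePolytope P) :
    P ⊆ convexHull ℚ (P.extremePoints ℚ) := by
  obtain ⟨S, -, rfl⟩ := hP
  exact (convexHull_extremePoints_convexHull_finset S).ge

theorem isLatticePt_of_mem_extremePoints (hP : IsLatticePolytope P) {v : Fin n → ℚ}
    (hv : v ∈ P.extremePoints ℚ) : IsLatticePt v := by
  obtain ⟨S, hS, rfl⟩ := hP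
  exact hS v (extremePoints_convexHull_subset hv)

theorem convex (hP : IsLatticePolytope P) : Convex ℚ P := by
  obtain ⟨S, -, rfl⟩ := hP
  exact convex_convexHull ℚ _

end IsLatticePolytope

section Pairing

variable {n : ℕ}

theorem dpair_add_left (u v x : Fin n → ℚ) : dpair (u + v) x = dpair u x + dpair v x :=
  add_dotProduct u v x

theorem dpair_sub_left (u v x : Fin n → ℚ) : dpair (u - v) x = dpair u x - dpair v x :=
  sub_dotProduct u v x

theorem dpair_smul_left (c : ℚ) (u x : Fin n → ℚ) : dpair (c • u) x = c * dpair u x :=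
  smul_dotProduct c u x

theorem dpair_add_right (u x y : Fin n → ℚ) : dpair u (x + y) = dpair u x + dpair u y :=
  dotProduct_add u x y

theorem dpair_smul_right (u : Fin n → ℚ) (c : ℚ) (x : Fin n → ℚ) :
    dpair u (c • x) = c * dpair u x :=
  dotProduct_smul c u x

theorem isLinearMap_dpair (u : Fin n → ℚ) : IsLinearMap ℚ (dpair u) :=
  ⟨dotProduct_add u, fun c x => dotProduct_smul c u x⟩

theorem IsLatticePt.exists_dpair_eq_intCast {x y : Fin n → ℚ} (hx : IsLatticePt x)
    (hy : IsLatticePt y) : ∃ z : ℤ, dpair x y = z := by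
  choose a ha using hx
  choose b hb using hy
  exact ⟨∑ i, a i * b i, by simp [dpair, ha, hb]⟩

theorem IsLatticePt.add_smul {x y : Fin n → ℚ} (hx : IsLatticePt x) (hy : IsLatticePt y)
    (z : ℤ) : IsLatticePt (x + (z : ℚ) • y) := by
  intro i
  obtain ⟨a, ha⟩ := hx i
  obtain ⟨b, hb⟩ := hy i
  exact ⟨a + z * b, by simp [ha, hb]⟩

theorem dualP_anti {X Y : Set (Fin n → ℚ)} (h : X ⊆ Y) : dualP Y ⊆ dualP X :=
  fun _ hu v hv => hu v (h hv)

theorem dualP_convexHull (X : Set (Fin n → ℚ)) : dualP (convexHull ℚ X) = dualP X :=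
  (dualP_anti (subset_convexHull ℚ X)).antisymm fun u hu _ hv =>
    convexHull_min hu (convex_halfSpace_ge (isLinearMap_dpair u) (-1)) hv

end Pairing

section MinPairing

variable {n : ℕ} {S : Finset (Fin n → ℚ)}

theorem isLeast_inf'_dpair (hS : S.Nonempty) (u : Fin n → ℚ) :
    IsLeast (dpair u '' convexHull ℚ (S : Set (Fin n → ℚ))) (S.inf' hS (dpair u)) := by
  obtain ⟨s, hs, hmin⟩ := S.exists_mem_eq_inf' hS (dpair u)
  refine ⟨⟨s, subset_convexHull ℚ _ hs, hmin.symm⟩, ?_⟩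
  rintro _ ⟨f, hf, rfl⟩
  exact convexHull_min (fun t ht => S.inf'_le (dpair u) ht)
    (convex_halfSpace_ge (isLinearMap_dpair u) _) hf

theorem inf'_dpair_add_smul (hS : S.Nonempty) {w : Fin n → ℚ} (hw : ∀ s ∈ S, dpair w s = 0)
    (u : Fin n → ℚ) (c : ℚ) : S.inf' hS (dpair (u + c • w)) = S.inf' hS (dpair u) :=
  Finset.inf'_congr hS rfl fun s hs => by
    rw [dpair_add_left, dpair_smul_left, hw s hs, mul_zero, add_zero]

theorem inf'_dpair_smul (hS : S.Nonempty) {c : ℚ} (hc : 0 ≤ c) (u : Fin n → ℚ) :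
    S.inf' hS (dpair (c • u)) = c * S.inf' hS (dpair u) := by
  obtain ⟨s, hs, hmin⟩ := S.exists_mem_eq_inf' hS (dpair u)
  refine le_antisymm ?_ (S.le_inf' hS _ fun t ht => ?_)
  · calc S.inf' hS (dpair (c • u)) ≤ dpair (c • u) s := S.inf'_le _ hs
      _ = c * S.inf' hS (dpair u) := by rw [dpair_smul_left, hmin]
  · rw [dpair_smul_left]
    exact mul_le_mul_of_nonneg_left (S.inf'_le (dpair u) ht) hc

theorem exists_inf'_dpair_eq_intCast (hS : S.Nonempty) (hSlat : ∀ s ∈ S, IsLatticePt s)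
    {u : Fin n → ℚ} (hu : IsLatticePt u) : ∃ z : ℤ, S.inf' hS (dpair u) = z := by
  obtain ⟨s, hs, hmin⟩ := S.exists_mem_eq_inf' hS (dpair u)
  rw [hmin]
  exact hu.exists_dpair_eq_intCast (hSlat s hs)

end MinPairing

section Mutation

variable {n : ℕ} {w : Fin n → ℤ} {P F : Set (Fin n → ℚ)} {G : ℤ → Set (Fin n → ℚ)}

theorem wSlice_subset (hP : Convex ℚ P) (h : ℤ) : wSlice w h P ⊆ P :=
  convexHull_min (fun _ hx => hx.1) hP

theorem pairing_eq_of_mem_wSlice {h : ℤ} {x : Fin n → ℚ} (hx : x ∈ wSlice w h P) :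
    pairing w x = h :=
  convexHull_min (fun _ hy => hy.2.2) (convex_hyperplane (isLinearMap_dpair _) _) hx

theorem mem_dualP_mutation_iff {u : Fin n → ℚ} :
    u ∈ dualP (mutation w P F G) ↔
      (∀ h < 0, ∀ x ∈ G h, -1 ≤ dpair u x) ∧
      ∀ h ≥ 0, ∀ y ∈ wSlice w h P, ∀ f ∈ F, -1 ≤ dpair u (y + (h : ℚ) • f) := by
  rw [mutation, dualP_convexHull]
  simp only [dualP, mem_ofPred_eq, mem_union, mem_iUnion]
  constructor
  · intro hu
    exact ⟨fun h hh x hx => hu x (.inl ⟨h, hh, hx⟩),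
      fun h hh y hy f hf => hu _ (.inr ⟨h, hh, add_mem_add hy (smul_mem_smul_set hf)⟩)⟩
  · rintro ⟨hneg, hnonneg⟩ x (⟨h, hh, hx⟩ | ⟨h, hh, hx⟩)
    · exact hneg h hh x hx
    · obtain ⟨y, hy, _, ⟨f, hf, rfl⟩, rfl⟩ := hx
      exact hnonneg h hh y hy f hf

theorem add_smul_mem_dualP_of_mem_dualP_mutation (hP : IsLatticePolytope P)
    (hcover : ∀ h : ℤ, h < 0 →
      {v | v ∈ P.extremePoints ℚ ∧ pairing w v = h} ⊆ G h + (-(h : ℚ)) • F)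
    {u : Fin n → ℚ} (hu : u ∈ dualP (mutation w P F G)) {c : ℚ} (hc : IsLeast (dpair u '' F) c) :
    u + c • (fun i => (w i : ℚ)) ∈ dualP P := by
  obtain ⟨hneg, hnonneg⟩ := mem_dualP_mutation_iff.1 hu
  obtain ⟨⟨f₀, hf₀, hf₀c⟩, hcle⟩ := hc
  refine dualP_anti hP.subset_convexHull_extremePoints ?_
  rw [dualP_convexHull]
  intro e he
  have he_lat := hP.isLatticePt_of_mem_extremePoints he
  obtain ⟨h, hh⟩ := IsLatticePt.exists_dpair_eq_intCast (fun i => ⟨w i, rfl⟩) he_lat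
  rw [dpair_add_left, dpair_smul_left, hh]
  rcases le_or_gt 0 h with h0 | h0
  · have hslice := hnonneg h h0 e (subset_convexHull ℚ _ ⟨he.1, he_lat, hh⟩) f₀ hf₀
    rw [dpair_add_right, dpair_smul_right, hf₀c] at hslice
    linarith
  · obtain ⟨g, hg, _, ⟨f, hf, rfl⟩, rfl⟩ := hcover h h0 ⟨he, hh⟩
    have hfc : c ≤ dpair u f := hcle ⟨f, hf, rfl⟩
    have hh0 : (h : ℚ) < 0 := by exact_mod_cast h0
    rw [dpair_add_right, dpair_smul_right]
    nlinarith [hneg h h0 g hg]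

theorem sub_smul_mem_dualP_mutation_of_mem_dualP (hP : Convex ℚ P)
    (hF : ∀ x ∈ F, pairing w x = 0)
    (hslice : ∀ h : ℤ, h < 0 → G h + (-(h : ℚ)) • F ⊆ wSlice w h P)
    {u : Fin n → ℚ} (hu : u ∈ dualP P) {c : ℚ} (hc : IsLeast (dpair u '' F) c) :
    u - c • (fun i => (w i : ℚ)) ∈ dualP (mutation w P F G) := by
  obtain ⟨⟨f₀, hf₀, hf₀c⟩, hcle⟩ := hc
  refine mem_dualP_mutation_iff.2 ⟨fun h hh x hx => ?_, fun h hh y hy f hf => ?_⟩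
  · have hxf : x + (-(h : ℚ)) • f₀ ∈ wSlice w h P :=
      hslice h hh (add_mem_add hx (smul_mem_smul_set hf₀))
    have hPx := hu _ (wSlice_subset hP h hxf)
    have hx_height : dpair (fun i => (w i : ℚ)) (x + (-(h : ℚ)) • f₀) = h :=
      pairing_eq_of_mem_wSlice hxf
    have hf₀_height : dpair (fun i => (w i : ℚ)) f₀ = 0 := hF f₀ hf₀
    rw [dpair_add_right, dpair_smul_right, hf₀_height, mul_zero, add_zero] at hx_height
    rw [dpair_add_right, dpair_smul_right, hf₀c] at hPx
    rw [dpair_sub_left, dpair_smul_left, hx_height]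
    linarith
  · have hPy := hu y (wSlice_subset hP h hy)
    have hy_height : dpair (fun i => (w i : ℚ)) y = h := pairing_eq_of_mem_wSlice hy
    have hf_height : dpair (fun i => (w i : ℚ)) f = 0 := hF f hf
    have hfc : c ≤ dpair u f := hcle ⟨f, hf, rfl⟩
    have hh0 : (0 : ℚ) ≤ h := by exact_mod_cast hh
    rw [dpair_sub_left, dpair_smul_left, dpair_add_right, dpair_add_right, dpair_smul_right,
      dpair_smul_right, hy_height, hf_height]
    nlinarith

end Mutation

section LatticeCount

variable {n : ℕ}

theorem ncard_intCast_preimage (A : Set (Fin n → ℚ)) :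
    {u : Fin n → ℤ | (fun i => (u i : ℚ)) ∈ A}.ncard = (A ∩ {x | IsLatticePt x}).ncard := by
  have hinj : Function.Injective fun (u : Fin n → ℤ) i => (u i : ℚ) :=
    fun u v huv => funext fun i => Int.cast_injective (congrFun huv i)
  rw [← ncard_image_of_injective _ hinj]
  congr
  ext x
  constructor
  · rintro ⟨u, hu, rfl⟩
    exact ⟨hu, fun i => ⟨u i, rfl⟩⟩
  · rintro ⟨hx, hlat⟩
    choose z hz using hlat
    have hxz : (fun i => (z i : ℚ)) = x := funext fun i => (hz i).symm
    exact ⟨z, by simpa [hxz] using hx, hxz⟩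

theorem bijOn_add_inf'_dpair_smul {S : Finset (Fin n → ℚ)} (hS : S.Nonempty)
    (hSlat : ∀ s ∈ S, IsLatticePt s) {w : Fin n → ℤ} (hw : ∀ s ∈ S, pairing w s = 0)
    {A B : Set (Fin n → ℚ)}
    (hBA : ∀ u ∈ B, u + S.inf' hS (dpair u) • (fun i => (w i : ℚ)) ∈ A)
    (hAB : ∀ u ∈ A, u - S.inf' hS (dpair u) • (fun i => (w i : ℚ)) ∈ B) {k : ℚ} (hk : 0 ≤ k) :
    BijOn (fun u => u + S.inf' hS (dpair u) • (fun i => (w i : ℚ)))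
      (k • B ∩ {x | IsLatticePt x}) (k • A ∩ {x | IsLatticePt x}) := by
  set wQ : Fin n → ℚ := fun i => (w i : ℚ)
  have hwQ : IsLatticePt wQ := fun i => ⟨w i, rfl⟩
  have hshift : ∀ u (c : ℚ), S.inf' hS (dpair (u + c • wQ)) = S.inf' hS (dpair u) :=
    inf'_dpair_add_smul hS hw
  have hsmul : ∀ u, S.inf' hS (dpair (k • u)) = k * S.inf' hS (dpair u) := inf'_dpair_smul hS hk
  have hint : ∀ u, IsLatticePt u → ∃ z : ℤ, S.inf' hS (dpair u) = z :=
    fun _ hu => exists_inf'_dpair_eq_intCast hS hSlat hu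
  refine InvOn.bijOn (f' := fun u => u - S.inf' hS (dpair u) • wQ)
    ⟨fun u _ => ?_, fun u _ => ?_⟩ ?_ ?_
  · simp only [hshift, add_sub_cancel_right]
  · dsimp only
    rw [sub_eq_add_neg, ← neg_smul, hshift, neg_smul, neg_add_cancel_right]
  · rintro _ ⟨⟨b, hb, rfl⟩, hlat⟩
    obtain ⟨z, hz⟩ := hint _ hlat
    refine ⟨⟨_, hBA b hb, ?_⟩, ?_⟩
    · simp only [hsmul, smul_add, smul_smul]
    · show IsLatticePt (_ + _ • wQ)
      rw [hz]
      exact hlat.add_smul hwQ z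
  · rintro _ ⟨⟨a, ha, rfl⟩, hlat⟩
    obtain ⟨z, hz⟩ := hint _ hlat
    refine ⟨⟨_, hAB a ha, ?_⟩, ?_⟩
    · simp only [hsmul, smul_sub, smul_smul]
    · simpa [hz, sub_eq_add_neg, ← neg_smul] using hlat.add_smul hwQ (-z)

end LatticeCount

theorem mutation_preserves_dual_ehrhart_general {n : ℕ} (w : Fin n → ℤ) (P F : Set (Fin n → ℚ))
    (G : ℤ → Set (Fin n → ℚ)) (hP : IsLatticePolytope P)
    (hdata : IsMutData w P F G) :
    ∀ k : ℕ, 0 < k →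
      Set.ncard {u : Fin n → ℤ | (fun i => (u i : ℚ)) ∈ (k : ℚ) • dualP P} =
      Set.ncard {u : Fin n → ℤ |
        (fun i => (u i : ℚ)) ∈ (k : ℚ) • dualP (mutation w P F G)} := by
  intro k _
  obtain ⟨⟨S, hSlat, rfl⟩, hFne, hFw, hG⟩ := hdata
  have hS : S.Nonempty := by simpa using hFne
  rw [ncard_intCast_preimage, ncard_intCast_preimage]
  refine (bijOn_add_inf'_dpair_smul hS hSlat (fun s hs => hFw s (subset_convexHull ℚ _ hs))
    (fun u hu => add_smul_mem_dualP_of_mem_dualP_mutation hP (fun h hh => (hG h hh).2.1) hu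
      (isLeast_inf'_dpair hS u))
    (fun u hu => sub_smul_mem_dualP_mutation_of_mem_dualP hP.convex hFw (fun h hh => (hG h hh).2.2)
      hu (isLeast_inf'_dpair hS u))
    k.cast_nonneg).ncard_eq.symm

/-- Combinatorial mutations preserve the Ehrhart series of the dual polytope: for every
positive integer `k`, the dilates `kP*` and `kQ*` contain the same number of lattice
points, where `Q = mut_w(P,F)`. -/
theorem mutation_preserves_dual_ehrhart {n : ℕ} (w : Fin n → ℤ) (P F : Set (Fin n → ℚ))
    (G : ℤ → Set (Fin n → ℚ)) (hP : IsLatticePolytope P)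
    (h0 : (0 : Fin n → ℚ) ∈ interior P) (hw : IsPrimitive w)
    (hdata : IsMutData w P F G) :
    ∀ k : ℕ, 0 < k →
      Set.ncard {u : Fin n → ℤ | (fun i => (u i : ℚ)) ∈ (k : ℚ) • dualP P} =
      Set.ncard {u : Fin n → ℤ |
        (fun i => (u i : ℚ)) ∈ (k : ℚ) • dualP (mutation w P F G)} :=
  mutation_preserves_dual_ehrhart_general w P F G hP hdata
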